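/- Let S ⊆ P_*(X) satisfy: (i) J ∈ S implies X∖J ∉ S; (ii) J ∈ P_*(X) and J ∉ S implies X∖J ∈ S; (iii) J, K ∈ S with J∩K = ∅ implies J∪K ∈ S; (iv) J, K ∈ S with J∪K = X implies J∩K ∈ S. Then S and S' = {J : X∖J ∈ S} are opposite precells relative to X (in particular S is a paracell). -/

import Mathlib

open scoped Classical

namespace GRF

variable {α : Type*} [DecidableEq α]

/-- `J` is a proper (nonempty, not everything) subset of `X`. -/
def IsProperSubset (X J : Finset α) : Prop := J ⊆ X ∧ J ≠ ∅ ∧ J ≠ X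

/-- A proper sequence in `P(X)`: a nonempty list of pairwise disjoint nonempty
subsets of `X` with union `X`. -/
def IsProperSeq (X : Finset α) (c : List (Finset α)) : Prop :=
  c ≠ [] ∧ (∀ J ∈ c, J ≠ ∅) ∧ List.Pairwise (fun I J => I ∩ J = ∅) c ∧
    c.foldr (· ∪ ·) ∅ = X

/-- The product of two sequences: all `A_i ∩ B_j`, ordered first by `j` then by `i`,
with empty intersections deleted. -/
noncomputable def seqMul (a b : List (Finset α)) : List (Finset α) :=
  ((b.map fun B => a.map fun A => A ∩ B).flatten).filter fun J => J ≠ ∅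

/-- The set `S' = {J ⊆ X : X \ J ∈ S}` opposite to `S`. -/
def opp (X : Finset α) (S : Set (Finset α)) : Set (Finset α) :=
  {J | J ⊆ X ∧ X \ J ∈ S}

/-- A paracell associated to `X`. -/
def IsParacell (X : Finset α) (S : Set (Finset α)) : Prop :=
  S.Nonempty ∧ (∀ J ∈ S, IsProperSubset X J) ∧
    ∀ I ∈ S, ∀ J ∈ S, I ∩ J ∈ S ∨ I ∪ J ∈ S

/-- A precell associated to `X`. -/
def IsPrecell (X : Finset α) (S : Set (Finset α)) : Prop :=
  IsParacell X S ∧ ∀ J : Finset α, IsProperSubset X J → J ∈ S ∨ X \ J ∈ S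

/-- A cell associated to `X`: a precell admitting real weights with zero total sum,
positive on all members of the cell. -/
def IsCell (X : Finset α) (S : Set (Finset α)) : Prop :=
  IsPrecell X S ∧ ∃ s : α → ℝ,
    (∑ j ∈ X, s j) = 0 ∧ ∀ J ∈ S, 0 < ∑ j ∈ J, s j

/-- `Y ↓ S` for `S` a paracell associated to `X`. -/
def cellDown (Y X : Finset α) (S : Set (Finset α)) : Set (Finset α) :=
  {J | IsProperSubset (Y ∪ X) J ∧ (J ∩ X = X ∨ J ∩ X ∈ S)}

/-- `Y ↑ S'` for `S'` a paracell associated to `X`. -/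
def cellUp (Y X : Finset α) (S : Set (Finset α)) : Set (Finset α) :=
  {J | IsProperSubset (Y ∪ X) J ∧ (J ∩ X = ∅ ∨ J ∩ X ∈ S)}

/-- `Y ↓ j` for a single index `j`. -/
def ptDown (Y : Finset α) (j : α) : Set (Finset α) :=
  {J | IsProperSubset (insert j Y) J ∧ j ∈ J}

/-- `Y ↑ j` for a single index `j`. -/
def ptUp (Y : Finset α) (j : α) : Set (Finset α) :=
  {J | IsProperSubset (insert j Y) J ∧ j ∉ J}

/-- The underlying vector space of the algebra `A(X)`: formal complex linear
combinations of sequences of subsets. -/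
abbrev AX (α : Type*) [DecidableEq α] : Type _ := (List (Finset α)) →₀ ℂ

/-- The multiplication of `A(X)`, extending `seqMul` bilinearly. -/
noncomputable def amul (x y : AX α) : AX α :=
  x.sum fun a ca => y.sum fun b cb => Finsupp.single (seqMul a b) (ca * cb)

/-- The unit `{X}` of `A(X)`. -/
noncomputable def oneA (X : Finset α) : AX α := Finsupp.single [X] 1

/-- `Î = {I, X \ I}` as an element of `A(X)`. -/
noncomputable def hatI (X I : Finset α) : AX α := Finsupp.single [I, X \ I] 1

/-- Product of a list of elements of `A(X)` (with unit `{X}`). -/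
noncomputable def aprod (X : Finset α) (l : List (AX α)) : AX α :=
  l.foldr amul (oneA X)

/-- A `ν`-chain associated to `S'`: a proper sequence all of whose proper initial
partial unions lie in `S'`. -/
def IsChainFor (X : Finset α) (S' : Set (Finset α)) (c : List (Finset α)) : Prop :=
  IsProperSeq X c ∧
    ∀ r : ℕ, 0 < r → r < c.length → ((c.take r).foldr (· ∪ ·) ∅) ∈ S'

lemma IsProperSeq.nodup {X : Finset α} {c : List (Finset α)}
    (h : IsProperSeq X c) : c.Nodup := by
  obtain ⟨-, hne, hpw, -⟩ := h
  refine List.Pairwise.imp_of_mem ?_ hpw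
  intro a b ha _ hab
  intro h'
  subst h'
  exact hne a ha (by simpa using hab)

/-- `U_S = Σ_ν Σ_{ν-chains for S'} (−1)^{ν−1} {J_1,…,J_ν}`, as a function of the
opposite paracell `S'`. -/
noncomputable def US [Fintype α] (X : Finset α) (S' : Set (Finset α)) : AX α :=
  Finsupp.ofSupportFinite
    (fun c => if IsChainFor X S' c then (-1 : ℂ) ^ (c.length - 1) else 0)
    (Set.Finite.subset
      (List.finite_length_le (Finset α) (Fintype.card (Finset α)))
      (by
        intro c hc
        have h : IsChainFor X S' c := by
          by_contra h
          simp [Function.mem_support, h] at hc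
        exact h.1.nodup.length_le_card))

/-- The underlying vector space of `A(A∪{1}) ⊗ A(B∪{1})`. -/
abbrev AX2 (α : Type*) [DecidableEq α] : Type _ :=
  (List (Finset α) × List (Finset α)) →₀ ℂ

/-- The multiplication of the tensor product algebra. -/
noncomputable def tmul (x y : AX2 α) : AX2 α :=
  x.sum fun a ca => y.sum fun b cb =>
    Finsupp.single (seqMul a.1 b.1, seqMul a.2 b.2) (ca * cb)

/-- The tensor `u ⊗ v` of two elements of `A(A∪{1})` and `A(B∪{1})`. -/
noncomputable def tens (u v : AX α) : AX2 α :=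
  u.sum fun a ca => v.sum fun b cb => Finsupp.single (a, b) (ca * cb)

/-- The pair `(c_A, c_B)` of traces of a sequence `c` on `A∪{1}` and `B∪{1}`,
with empty sets deleted. -/
noncomputable def facSeq (A1 B1 : Finset α) (c : List (Finset α)) :
    List (Finset α) × List (Finset α) :=
  ((c.map fun J => J ∩ A1).filter fun J => J ≠ ∅,
   (c.map fun J => J ∩ B1).filter fun J => J ≠ ∅)

/-- The factorization map `Fac : A(X) → A(A∪{1}) ⊗ A(B∪{1})`. -/
noncomputable def Fac (A1 B1 : Finset α) (x : AX α) : AX2 α :=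
  x.sum fun c cc => Finsupp.single (facSeq A1 B1 c) cc

/-- The paracell `(S‖1,A)` built from opposite paracells `S`, `S'` relative to
`X = A ∪ B ∪ {o}`. -/
def restCell (A : Finset α) (o : α) (S S' : Set (Finset α)) : Set (Finset α) :=
  {J | IsProperSubset (insert o A) J ∧
    ((J ⊆ A ∧ J ∈ S) ∨ (o ∈ J ∧ A \ J ∈ S'))}

/-!
Conditions (i) and (ii) say that `S` contains exactly one set of each complementary pair, so
the only thing to prove is the paracell axiom. If `I, J ∈ S` but neither `I ∩ J` nor `I ∪ J`
is, then their complements are in `S`; intersecting `I` and `J` with `X \ (I ∩ J)` via (iv)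
gives `I \ J, J \ I ∈ S`, whence the symmetric difference `D` is in `S` by (iii), while
`(X \ (I ∪ J)) ∪ I` and `(X \ (I ∪ J)) ∪ J` are in `S` by (iii) and their intersection
`X \ D` by (iv), contradicting (i). Passing to complements turns any precell into a precell.
-/

namespace IsProperSubset

variable {X I J : Finset α}

lemma sdiff_left (h : IsProperSubset X J) : IsProperSubset X (X \ J) := by
  obtain ⟨hJX, hJ, hJX'⟩ := h
  refine ⟨Finset.sdiff_subset, fun he => hJX' ?_, fun he => hJ ?_⟩
  · exact hJX.antisymm (Finset.sdiff_eq_empty_iff_subset.mp he)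
  · exact (Finset.sdiff_eq_self_iff_disjoint.mp he).symm.eq_bot_of_le hJX

lemma inter (hI : IsProperSubset X I) (hIJ : I ∩ J ≠ ∅) :
    IsProperSubset X (I ∩ J) :=
  ⟨Finset.inter_subset_left.trans hI.1, hIJ, fun he =>
    hI.2.2 (hI.1.antisymm (he ▸ Finset.inter_subset_left))⟩

lemma union (hI : IsProperSubset X I) (hJ : J ⊆ X) (hIJ : I ∪ J ≠ X) :
    IsProperSubset X (I ∪ J) :=
  ⟨Finset.union_subset hI.1 hJ, fun he => hI.2.1 (Finset.union_eq_empty.mp he).1, hIJ⟩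

end IsProperSubset

omit [DecidableEq α] in
lemma exists_isProperSubset {X : Finset α} (hX : 2 ≤ X.card) : ∃ J, IsProperSubset X J := by
  obtain ⟨x, hx⟩ := Finset.card_pos.mp (by omega : 0 < X.card)
  refine ⟨{x}, Finset.singleton_subset_iff.mpr hx, Finset.singleton_ne_empty x, fun he => ?_⟩
  simp [← he] at hX

lemma IsParacell.opp {X : Finset α} {S : Set (Finset α)} (hS : IsParacell X S) :
    IsParacell X (opp X S) := by
  obtain ⟨⟨J, hJ⟩, hsub, hclose⟩ := hS
  refine ⟨⟨X \ J, Finset.sdiff_subset, ?_⟩, ?_, ?_⟩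
  · rwa [Finset.sdiff_sdiff_eq_self (hsub J hJ).1]
  · rintro J ⟨hJX, hJS⟩
    simpa [Finset.sdiff_sdiff_eq_self hJX] using (hsub _ hJS).sdiff_left
  · rintro I ⟨hIX, hIS⟩ J ⟨hJX, hJS⟩
    rcases hclose _ hIS _ hJS with h | h
    · exact Or.inr ⟨Finset.union_subset hIX hJX, by rwa [Finset.sdiff_union_distrib]⟩
    · exact Or.inl ⟨Finset.inter_subset_left.trans hIX, by rwa [Finset.sdiff_inter_distrib_right]⟩

lemma IsPrecell.opp {X : Finset α} {S : Set (Finset α)} (hS : IsPrecell X S) :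
    IsPrecell X (opp X S) := by
  refine ⟨hS.1.opp, fun J hJ => ?_⟩
  rcases hS.2 _ hJ.sdiff_left with h | h
  exacts [Or.inl ⟨hJ.1, h⟩, Or.inr ⟨Finset.sdiff_subset, h⟩]

structure PrecellConditions (X : Finset α) (S : Set (Finset α)) : Prop where
  isProperSubset : ∀ J ∈ S, IsProperSubset X J
  sdiff_notMem : ∀ J ∈ S, X \ J ∉ S
  sdiff_mem_of_notMem : ∀ J : Finset α, IsProperSubset X J → J ∉ S → X \ J ∈ S
  union_mem : ∀ J ∈ S, ∀ K ∈ S, J ∩ K = ∅ → J ∪ K ∈ S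
  inter_mem : ∀ J ∈ S, ∀ K ∈ S, J ∪ K = X → J ∩ K ∈ S

namespace PrecellConditions

variable {X I J : Finset α} {S : Set (Finset α)} (hS : PrecellConditions X S)
include hS

lemma sdiff_mem (hI : I ∈ S) (hIJ : X \ (I ∩ J) ∈ S) : I \ J ∈ S := by
  have hIX := (hS.isProperSubset I hI).1
  have h := hS.inter_mem I hI _ hIJ (by grind)
  rwa [show I ∩ (X \ (I ∩ J)) = I \ J by grind] at h

lemma sdiff_symmDiff_mem (hI : I ∈ S) (hJ : J ∈ S) (hIJ : X \ (I ∪ J) ∈ S) :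
    X \ (I \ J ∪ J \ I) ∈ S := by
  have hIX := (hS.isProperSubset I hI).1
  have hJX := (hS.isProperSubset J hJ).1
  have hI' := hS.union_mem _ hIJ I hI (by grind)
  have hJ' := hS.union_mem _ hIJ J hJ (by grind)
  have h := hS.inter_mem _ hI' _ hJ' (by grind)
  rwa [show (X \ (I ∪ J) ∪ I) ∩ (X \ (I ∪ J) ∪ J) = X \ (I \ J ∪ J \ I) by grind] at h

lemma inter_mem_or_union_mem (hI : I ∈ S) (hJ : J ∈ S) : I ∩ J ∈ S ∨ I ∪ J ∈ S := by
  by_contra! ⟨hcap, hcup⟩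
  have hJX := (hS.isProperSubset J hJ).1
  have hcap' := hS.sdiff_mem_of_notMem _
    ((hS.isProperSubset I hI).inter fun he => hcup (hS.union_mem I hI J hJ he)) hcap
  have hcup' := hS.sdiff_mem_of_notMem _
    ((hS.isProperSubset I hI).union hJX fun he => hcap (hS.inter_mem I hI J hJ he)) hcup
  have hIJ := hS.sdiff_mem hI hcap'
  have hJI := hS.sdiff_mem hJ (Finset.inter_comm I J ▸ hcap')
  exact hS.sdiff_notMem _ (hS.union_mem _ hIJ _ hJI (by grind)) (hS.sdiff_symmDiff_mem hI hJ hcup')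

lemma isPrecell (hX : 2 ≤ X.card) : IsPrecell X S := by
  have hcompl (J : Finset α) (hJ : IsProperSubset X J) : J ∈ S ∨ X \ J ∈ S :=
    (em (J ∈ S)).imp_right (hS.sdiff_mem_of_notMem J hJ)
  obtain ⟨J, hJ⟩ := exists_isProperSubset hX
  refine ⟨⟨?_, hS.isProperSubset, fun I hI J hJ => hS.inter_mem_or_union_mem hI hJ⟩, hcompl⟩
  exact (hcompl J hJ).elim (⟨_, ·⟩) (⟨_, ·⟩)

end PrecellConditions

/-- A subset of `P_*(X)` with properties (i)-(iv) is a precell with opposite precell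
`S' = {J : X∖J ∈ S}`. -/
theorem precell_of_conditions {α : Type*} [DecidableEq α] (X : Finset α)
    (hX : 2 ≤ X.card) (S : Set (Finset α))
    (hsub : ∀ J ∈ S, IsProperSubset X J)
    (h1 : ∀ J ∈ S, X \ J ∉ S)
    (h2 : ∀ J : Finset α, IsProperSubset X J → J ∉ S → X \ J ∈ S)
    (h3 : ∀ J ∈ S, ∀ K ∈ S, J ∩ K = ∅ → J ∪ K ∈ S)
    (h4 : ∀ J ∈ S, ∀ K ∈ S, J ∪ K = X → J ∩ K ∈ S) :
    IsPrecell X S ∧ IsPrecell X (opp X S) := by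
  have hS : IsPrecell X S := PrecellConditions.isPrecell ⟨hsub, h1, h2, h3, h4⟩ hX
  exact ⟨hS, hS.opp⟩

end GRF
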